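/- arXiv:2605.12886 — 2 statements merged into one kernel-verified Lean document; each statement's English description precedes it below -/
import Mathlib

section
/- Let r ≥ 1 and let (V_j)_{j : Fin r} be finite-dimensional vector spaces over ℂ. For each j, let κ_j be a finite index type with data λ_j : κ_j → ℂ, endomorphisms P_{j,k}, N_{j,k} of V_j, and integers m_{j,k} ≥ 1 satisfying, for each fixed j: P_{j,k}² = P_{j,k}; P_{j,k} ∘ P_{j,l} = 0 for k ≠ l; ∑_k P_{j,k} = id; P_{j,k} ∘ N_{j,k} = N_{j,k} ∘ P_{j,k} = N_{j,k}; P_{j,k} ∘ N_{j,l} = N_{j,l} ∘ P_{j,k} = 0 for k ≠ l; and N_{j,k}^{m_{j,k}} = 0. Set X_j = ∑_k (λ_{j,k} • P_{j,k} + N_{j,k}), and let lift_j(X_j) be the endomorphism of W = ⨂_{j : Fin r} V_j applying X_j in the j-th tensor coordinate and the identity elsewhere. Then for every multivariate polynomial F ∈ ℂ[z_1, …, z_r], evaluating F at the commuting tuple (lift_1(X_1), …, lift_r(X_r)) in End(W) gives: F(lift X) = ∑_{k ∈ ∏_j κ_j} ∑_{q, 0 ≤ q_j ≤ m_{j,k_j}−1}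 ( (∏_j ∂_j^{q_j} F)(λ_{1,k_1}, …, λ_{r,k_r}) / ∏_j q_j! ) • ⨂_{j} ( N_{j,k_j}^{q_j} ∘ P_{j,k_j} ), where ∂_j denotes the formal partial derivative in the j-th variable, N^0 ∘ P = P, and ⨂_j f_j denotes the induced endomorphism PiTensorProduct.map of W. -/
/-! Both sides are linear in `F`, so it suffices to treat a monomial `z^d`, whose value at the
lifted tuple is the elementary tensor map `⨂_j X_j^{d_j}`. On the range of `P_k` the operator `X`
acts as `λ_k + N_k` with `N_k^{m_k} = 0`, so the binomial theorem gives
`X^d = ∑_k ∑_{q < m_k} C(d,q) λ_k^{d-q} N_k^q P_k`. Multilinearity of `⨂` distributes these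
sums, and `∏_j C(d_j,q_j) λ_j^{d_j-q_j}`, summed against the coefficients of `F`, is
`(∂^q F)(λ_k) / q!`. -/

open scoped TensorProduct

/-- Evaluation of a multivariate polynomial at a (commuting) tuple of elements of a
possibly noncommutative algebra: `F ↦ ∑_{d ∈ supp F} (coeff d F) • T₁^{d₁} ⋯ T_r^{d_r}`. -/
noncomputable def mvEvalAt {r : ℕ} {A : Type*} [Ring A] [Algebra ℂ A]
    (T : Fin r → A) (F : MvPolynomial (Fin r) ℂ) : A :=
  ∑ d ∈ F.support, MvPolynomial.coeff d F • (List.ofFn (fun j => T j ^ d j)).prod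

section Operators

variable {R A : Type*} [CommSemiring R] [Semiring A] [Algebra R A]

theorem pow_mul_eq_pow_mul_of_mul_eq {M : Type*} [Monoid M] {a b p : M}
    (h : a * p = b * p) (hb : Commute b p) (n : ℕ) : a ^ n * p = b ^ n * p := by
  induction n with
  | zero => simp
  | succ n ih =>
    calc a ^ (n + 1) * p = a ^ n * p * b := by rw [pow_succ, mul_assoc, h, hb.eq, mul_assoc]
      _ = b ^ (n + 1) * p := by rw [ih, mul_assoc, ← hb.eq, ← mul_assoc, ← pow_succ]

open Finset in
theorem algebraMap_add_pow_of_pow_eq_zero (c : R) {N : A} {m : ℕ} (hN : N ^ m = 0) (d : ℕ) :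
    (algebraMap R A c + N) ^ d = ∑ q ∈ range m, ((d.choose q : R) * c ^ (d - q)) • N ^ q := by
  set f : ℕ → A := fun q => ((d.choose q : R) * c ^ (d - q)) • N ^ q
  have hf : ∀ q, N ^ q * algebraMap R A c ^ (d - q) * (d.choose q : A) = f q := by
    intro q
    simp only [f]
    rw [Algebra.smul_def, Algebra.commutes, map_mul, map_natCast, map_pow, Nat.cast_comm,
      mul_assoc]
  have hvanish : ∀ q, d < q ∨ m ≤ q → f q = 0 := by
    rintro q (hq | hq)
    · simp [f, Nat.choose_eq_zero_of_lt hq]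
    · simp [f, pow_eq_zero_of_le hq hN]
  calc (algebraMap R A c + N) ^ d = ∑ q ∈ range (d + 1), f q := by
        simp_rw [add_comm _ N, (Algebra.commute_algebraMap_right c N).add_pow, hf]
    _ = ∑ q ∈ range (min (d + 1) m), f q :=
        (sum_subset (range_subset_range.2 (min_le_left _ _)) fun q hq hq' =>
          hvanish q (by simp at hq hq'; omega)).symm
    _ = ∑ q ∈ range m, f q :=
        sum_subset (range_subset_range.2 (min_le_right _ _)) fun q hq hq' =>
          hvanish q (by simp at hq hq'; omega)

theorem pow_eq_sum_of_projector_nilpotent {κ : Type*} [Fintype κ]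
    (lam : κ → R) (P N : κ → A) (m : κ → ℕ)
    (hP2 : ∀ k, P k * P k = P k) (hPortho : ∀ k l, k ≠ l → P k * P l = 0)
    (hPsum : ∑ k, P k = 1) (hPN : ∀ k, P k * N k = N k) (hNP : ∀ k, N k * P k = N k)
    (hNPc : ∀ k l, k ≠ l → N l * P k = 0) (hNnil : ∀ k, N k ^ m k = 0)
    (X : A) (hX : X = ∑ k, (lam k • P k + N k)) (d : ℕ) :
    X ^ d = ∑ k, ∑ q ∈ Finset.range (m k),
      ((d.choose q : R) * lam k ^ (d - q)) • (N k ^ q * P k) := by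
  have hXP : ∀ k, X * P k = (algebraMap R A (lam k) + N k) * P k := by
    intro k
    rw [hX, Finset.sum_mul, Finset.sum_eq_single k, add_mul, add_mul, smul_mul_assoc, hP2,
      ← Algebra.smul_def, hNP]
    · intro l _ hlk
      rw [add_mul, smul_mul_assoc, hPortho l k hlk, hNPc k l hlk.symm, smul_zero, add_zero]
    · simp
  have hcomm : ∀ k, Commute (algebraMap R A (lam k) + N k) (P k) := fun k =>
    (Algebra.commute_algebraMap_left _ _).add_left ((hNP k).trans (hPN k).symm)
  calc X ^ d = ∑ k, X ^ d * P k := by rw [← Finset.mul_sum, hPsum, mul_one]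
    _ = ∑ k, (algebraMap R A (lam k) + N k) ^ d * P k := by
        simp_rw [pow_mul_eq_pow_mul_of_mul_eq (hXP _) (hcomm _)]
    _ = _ := by
        simp_rw [algebraMap_add_pow_of_pow_eq_zero _ (hNnil _), Finset.sum_mul, smul_mul_assoc]

end Operators

namespace MvPolynomial

variable {σ R : Type*} [CommSemiring R]

theorem iterate_pderiv_monomial (j : σ) (n : ℕ) (e : σ →₀ ℕ) (c : R) :
    (pderiv j)^[n] (monomial e c)
      = monomial (e - Finsupp.single j n) ((e j).descFactorial n * c) := by
  induction n with
  | zero => simp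
  | succ n ih =>
    rw [Function.iterate_succ_apply', ih, pderiv_monomial, tsub_tsub, ← Finsupp.single_add,
      Finsupp.tsub_apply, Finsupp.single_eq_same, Nat.descFactorial_succ]
    push_cast
    ring_nf

theorem foldr_iterate_pderiv_monomial (q : σ → ℕ) {l : List σ} (hl : l.Nodup)
    (e : σ →₀ ℕ) (c : R) :
    l.foldr (fun j G => (pderiv j)^[q j] G) (monomial e c)
      = monomial (e - (l.map fun j => Finsupp.single j (q j)).sum)
          ((l.map fun j => ((e j).descFactorial (q j) : R)).prod * c) := by
  induction l with
  | nil => simp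
  | cons j t ih =>
    obtain ⟨hjt, ht⟩ := List.nodup_cons.1 hl
    have hsum_j : (t.map fun i => Finsupp.single i (q i)).sum j = 0 := by
      rw [← Finsupp.applyAddHom_apply, map_list_sum, List.map_map]
      refine List.sum_eq_zero fun a ha => ?_
      obtain ⟨i, hi, rfl⟩ := List.mem_map.1 ha
      exact Finsupp.single_eq_of_ne (ne_of_mem_of_not_mem hi hjt).symm
    rw [List.foldr_cons, ih ht, iterate_pderiv_monomial, Finsupp.tsub_apply, hsum_j,
      Nat.sub_zero, tsub_tsub, List.map_cons, List.sum_cons, List.map_cons, List.prod_cons,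
      add_comm, mul_assoc]

theorem foldr_iterate_pderiv_apply (q : σ → ℕ) (l : List σ) (F : MvPolynomial σ R) :
    l.foldr (fun j G => (pderiv j)^[q j] G) F
      = (l.map fun j => ((pderiv j).toLinearMap : Module.End R (MvPolynomial σ R)) ^ q j).prod
          F := by
  induction l with
  | nil => rfl
  | cons j t ih =>
    rw [List.foldr_cons, ih, List.map_cons, List.prod_cons, Module.End.mul_apply,
      Module.End.pow_apply]
    rfl

theorem eval_finFoldr_iterate_pderiv {r : ℕ} (q : Fin r → ℕ) (x : Fin r → R)
    (F : MvPolynomial (Fin r) R) :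
    eval x (Fin.foldr r (fun j G => (pderiv j)^[q j] G) F)
      = (∏ j, ((q j).factorial : R)) *
          ∑ d ∈ F.support, coeff d F * ∏ j, ((d j).choose (q j) : R) * x j ^ (d j - q j) := by
  rw [Fin.foldr_eq_foldr_finRange, foldr_iterate_pderiv_apply]
  conv_lhs => rw [F.as_sum]
  rw [map_sum, map_sum, Finset.mul_sum]
  refine Finset.sum_congr rfl fun d _ => ?_
  rw [← foldr_iterate_pderiv_apply, foldr_iterate_pderiv_monomial q (List.nodup_finRange r),
    eval_monomial, Finsupp.prod_fintype _ _ fun _ => pow_zero _]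
  have hexp : ∀ i, (d - ∑ j, Finsupp.single j (q j)) i = d i - q i := fun i => by
    simp [Finsupp.single_apply]
  simp only [← Fin.prod_univ_def, ← Fin.sum_univ_def, hexp,
    Nat.descFactorial_eq_factorial_mul_choose, Nat.cast_mul, Finset.prod_mul_distrib]
  ring

end MvPolynomial

namespace PiTensorProduct

variable {ι R : Type*} [DecidableEq ι] [CommSemiring R] {V : ι → Type*}
  [∀ i, AddCommMonoid (V i)] [∀ i, Module R (V i)]

theorem map_update_id_pow (j : ι) (Y : V j →ₗ[R] V j) (n : ℕ) :
    map (Function.update (fun i => (LinearMap.id : V i →ₗ[R] V i)) j Y) ^ n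
      = map (Function.update (fun i => (LinearMap.id : V i →ₗ[R] V i)) j (Y ^ n)) := by
  rw [← PiTensorProduct.map_pow]
  congr 1
  funext i
  rcases eq_or_ne i j with rfl | h
  · simp [Pi.pow_apply]
  · simp [Pi.pow_apply, Function.update_of_ne h]

theorem list_prod_map_map_update_id (Y : (i : ι) → V i →ₗ[R] V i) {l : List ι} (hl : l.Nodup) :
    (l.map fun j => map (Function.update (fun i => (LinearMap.id : V i →ₗ[R] V i)) j (Y j))).prod
      = map (fun i => if i ∈ l then Y i else LinearMap.id) := by
  induction l with
  | nil => simp [← Module.End.one_eq_id]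
  | cons j t ih =>
    rw [List.map_cons, List.prod_cons, ih (List.nodup_cons.1 hl).2, ← PiTensorProduct.map_mul]
    congr 1
    funext i
    rcases eq_or_ne i j with rfl | h
    · simp [(List.nodup_cons.1 hl).1, Module.End.mul_eq_comp]
    · simp [h, Module.End.mul_eq_comp]

theorem prod_ofFn_map_update_id {r : ℕ} {W : Fin r → Type*} [∀ i, AddCommMonoid (W i)]
    [∀ i, Module R (W i)] (Y : (i : Fin r) → W i →ₗ[R] W i) :
    (List.ofFn fun j =>
        map (Function.update (fun i => (LinearMap.id : W i →ₗ[R] W i)) j (Y j))).prod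
      = map Y := by
  rw [List.ofFn_eq_map, list_prod_map_map_update_id Y (List.nodup_finRange r)]
  simp

theorem map_sum_sum_smul [Fintype ι] {κ : ι → Type*} [∀ i, Fintype (κ i)]
    (s : (i : ι) → κ i → Finset ℕ) (c : (i : ι) → κ i → ℕ → R)
    (f : (i : ι) → κ i → ℕ → (V i →ₗ[R] V i)) :
    map (fun i => ∑ k, ∑ q ∈ s i k, c i k q • f i k q)
      = ∑ k : (i : ι) → κ i, ∑ q ∈ Fintype.piFinset fun i => s i (k i),
          (∏ i, c i (k i) (q i)) • map fun i => f i (k i) (q i) := by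
  change mapMultilinear R V V _ = _
  rw [MultilinearMap.map_sum]
  refine Finset.sum_congr rfl fun k _ => ?_
  rw [MultilinearMap.map_sum_finset]
  refine Finset.sum_congr rfl fun q _ => ?_
  exact MultilinearMap.map_smul_univ _ _ _

end PiTensorProduct

theorem unified_compact_formula_discrete_multivariate_general
    (r : ℕ)
    (V : Fin r → Type*) [∀ j, AddCommGroup (V j)] [∀ j, Module ℂ (V j)]
    (κ : Fin r → Type*) [∀ j, Fintype (κ j)]
    (lam : (j : Fin r) → κ j → ℂ)
    (P N : (j : Fin r) → κ j → (V j →ₗ[ℂ] V j))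
    (m : (j : Fin r) → κ j → ℕ)
    (hP2 : ∀ j k, P j k * P j k = P j k)
    (hPortho : ∀ j k l, k ≠ l → P j k * P j l = 0)
    (hPsum : ∀ j, ∑ k, P j k = 1)
    (hPN : ∀ j k, P j k * N j k = N j k)
    (hNP : ∀ j k, N j k * P j k = N j k)
    (hNPc : ∀ j k l, k ≠ l → N j l * P j k = 0)
    (hNnil : ∀ j k, N j k ^ (m j k) = 0)
    (X : (j : Fin r) → (V j →ₗ[ℂ] V j))
    (hX : ∀ j, X j = ∑ k, (lam j k • P j k + N j k))
    (F : MvPolynomial (Fin r) ℂ) :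
    mvEvalAt
        (fun j => (PiTensorProduct.map
            (Function.update (fun i => (LinearMap.id : V i →ₗ[ℂ] V i)) j (X j))
          : Module.End ℂ (⨂[ℂ] i, V i))) F
      = ∑ k : (j : Fin r) → κ j,
          ∑ q ∈ Fintype.piFinset (fun j => Finset.range (m j (k j))),
            ((MvPolynomial.eval (fun j => lam j (k j))
                (Fin.foldr r
                  (fun j G => (fun p => MvPolynomial.pderiv j p)^[q j] G) F))
              / ∏ j, ((q j).factorial : ℂ)) •
            (PiTensorProduct.map (fun j => N j (k j) ^ (q j) * P j (k j))
              : Module.End ℂ (⨂[ℂ] i, V i)) := by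
  have hpow (j : Fin r) (d : ℕ) := pow_eq_sum_of_projector_nilpotent (lam j) (P j) (N j) (m j)
    (hP2 j) (hPortho j) (hPsum j) (hPN j) (hNP j) (hNPc j) (hNnil j) (X j) (hX j) d
  have hcoeff (k : (j : Fin r) → κ j) (q : Fin r → ℕ) :
      MvPolynomial.eval (fun j => lam j (k j))
          (Fin.foldr r (fun j G => (fun p => MvPolynomial.pderiv j p)^[q j] G) F)
        / ∏ j, ((q j).factorial : ℂ)
      = ∑ d ∈ F.support, MvPolynomial.coeff d F *
          ∏ j, ((d j).choose (q j) : ℂ) * lam j (k j) ^ (d j - q j) := by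
    rw [MvPolynomial.eval_finFoldr_iterate_pderiv, mul_div_cancel_left₀]
    exact Finset.prod_ne_zero_iff.2 fun j _ => Nat.cast_ne_zero.2 (q j).factorial_ne_zero
  simp only [mvEvalAt, PiTensorProduct.map_update_id_pow, PiTensorProduct.prod_ofFn_map_update_id,
    hpow, PiTensorProduct.map_sum_sum_smul, Finset.smul_sum, hcoeff, Finset.sum_smul]
  simp only [smul_smul]
  rw [Finset.sum_comm]
  exact Finset.sum_congr rfl fun k _ => Finset.sum_comm

/-- Unified Compact Formula, discrete-spectrum finite-dimensional multivariate case: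
evaluating a multivariate polynomial at the tensor-lifted commuting tuple of operators
with discrete projector–nilpotent decompositions yields the sum, over eigenvalue
multi-indices `k` and nilpotent-order multi-indices `q`, of the mixed partial
derivatives of the polynomial times the tensor product of `N^{q_j} ∘ P`. -/
theorem unified_compact_formula_discrete_multivariate
    (r : ℕ) (hr : 1 ≤ r)
    (V : Fin r → Type*) [∀ j, AddCommGroup (V j)] [∀ j, Module ℂ (V j)]
    [∀ j, FiniteDimensional ℂ (V j)]
    (κ : Fin r → Type*) [∀ j, Fintype (κ j)]
    (lam : (j : Fin r) → κ j → ℂ)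
    (P N : (j : Fin r) → κ j → (V j →ₗ[ℂ] V j))
    (m : (j : Fin r) → κ j → ℕ) (hm : ∀ j k, 1 ≤ m j k)
    (hP2 : ∀ j k, P j k * P j k = P j k)
    (hPortho : ∀ j k l, k ≠ l → P j k * P j l = 0)
    (hPsum : ∀ j, ∑ k, P j k = 1)
    (hPN : ∀ j k, P j k * N j k = N j k)
    (hNP : ∀ j k, N j k * P j k = N j k)
    (hPNc : ∀ j k l, k ≠ l → P j k * N j l = 0)
    (hNPc : ∀ j k l, k ≠ l → N j l * P j k = 0)
    (hNnil : ∀ j k, N j k ^ (m j k) = 0)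
    (X : (j : Fin r) → (V j →ₗ[ℂ] V j))
    (hX : ∀ j, X j = ∑ k, (lam j k • P j k + N j k))
    (F : MvPolynomial (Fin r) ℂ) :
    mvEvalAt
        (fun j => (PiTensorProduct.map
            (Function.update (fun i => (LinearMap.id : V i →ₗ[ℂ] V i)) j (X j))
          : Module.End ℂ (⨂[ℂ] i, V i))) F
      = ∑ k : (j : Fin r) → κ j,
          ∑ q ∈ Fintype.piFinset (fun j => Finset.range (m j (k j))),
            ((MvPolynomial.eval (fun j => lam j (k j))
                (Fin.foldr r
                  (fun j G => (fun p => MvPolynomial.pderiv j p)^[q j] G) F))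
              / ∏ j, ((q j).factorial : ℂ)) •
            (PiTensorProduct.map (fun j => N j (k j) ^ (q j) * P j (k j))
              : Module.End ℂ (⨂[ℂ] i, V i)) :=
  unified_compact_formula_discrete_multivariate_general r V κ lam P N m hP2 hPortho hPsum hPN hNP
    hNPc hNnil X hX F
end

section
/- Let H be a complex Banach space and let X and X_n (n ∈ ℕ) be continuous linear endomorphisms of H. Fix c ∈ ℂ and R > 0, and let f : ℂ → ℂ be continuous. Assume: (i) for every z on the circle |z − c| = R, the operators z•id − X and z•id − X_n (for all n) are invertible in the Banach algebra of continuous linear endomorphisms of H; (ii) there is a constant M such that ‖(z•id − X_n)^{-1}‖ ≤ M for all n and all z on the circle; (iii) for every z on the circle and every u ∈ H, (z•id − X_n)^{-1} u → (z•id − X)^{-1} u in H as n → ∞. Then for every u ∈ H, the circle integrals converge: ∮_{|z−c|=R} f(z) • ((z•id − X_n)^{-1} u) dz → ∮_{|z−c|=R} f(z) • ((z•id − X)^{-1} u) dz in H as n → ∞. -/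
open Filter

private lemma cont_resolvent_apply
    {H : Type*} [NormedAddCommGroup H] [NormedSpace ℂ H] [CompleteSpace H]
    (A : H →L[ℂ] H) (c : ℂ) (R : ℝ)
    (hR : 0 < R)
    (h : ∀ z ∈ Metric.sphere c R, IsUnit (z • (1 : H →L[ℂ] H) - A)) (u : H) :
    Continuous fun θ : ℝ => Ring.inverse (circleMap c R θ • (1 : H →L[ℂ] H) - A) u := by
  have h1 : Continuous fun θ : ℝ =>
      Ring.inverse (circleMap c R θ • (1 : H →L[ℂ] H) - A) := by
    rw [continuous_iff_continuousAt]
    intro θ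
    have hz : circleMap c R θ ∈ Metric.sphere c R := circleMap_mem_sphere c hR.le θ
    obtain ⟨v, hv⟩ := h _ hz
    have h2 : ContinuousAt (Ring.inverse : (H →L[ℂ] H) → _)
        (circleMap c R θ • (1 : H →L[ℂ] H) - A) := by
      rw [← hv]; exact NormedRing.inverse_continuousAt v
    have h3 : ContinuousAt (fun θ : ℝ => circleMap c R θ • (1 : H →L[ℂ] H) - A) θ :=
      (((continuous_circleMap c R).smul continuous_const).sub
        continuous_const).continuousAt
    exact ContinuousAt.comp (g := Ring.inverse) h2 h3
  exact (ContinuousLinearMap.apply ℂ H u).continuous.comp h1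

/-- Level 1 single-operator convergence: strong resolvent convergence on the contour,
together with a uniform resolvent bound, implies convergence of the Dunford
contour integrals applied to each vector (strong operator topology convergence). -/
theorem level1_dunford_sot_convergence
    (H : Type*) [NormedAddCommGroup H] [NormedSpace ℂ H] [CompleteSpace H]
    (X : H →L[ℂ] H) (Xn : ℕ → H →L[ℂ] H) (c : ℂ) (R : ℝ) (hR : 0 < R)
    (f : ℂ → ℂ) (hf : Continuous f)
    (hinv : ∀ z ∈ Metric.sphere c R, IsUnit (z • (1 : H →L[ℂ] H) - X))
    (hinvn : ∀ n, ∀ z ∈ Metric.sphere c R, IsUnit (z • (1 : H →L[ℂ] H) - Xn n))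
    (M : ℝ)
    (hM : ∀ n, ∀ z ∈ Metric.sphere c R,
      ‖Ring.inverse (z • (1 : H →L[ℂ] H) - Xn n)‖ ≤ M)
    (hsot : ∀ z ∈ Metric.sphere c R, ∀ u : H,
      Tendsto (fun n => Ring.inverse (z • (1 : H →L[ℂ] H) - Xn n) u) atTop
        (nhds (Ring.inverse (z • (1 : H →L[ℂ] H) - X) u))) :
    ∀ u : H,
      Tendsto
        (fun n => ∮ z in C(c, R), f z • (Ring.inverse (z • (1 : H →L[ℂ] H) - Xn n) u))
        atTop
        (nhds (∮ z in C(c, R), f z • (Ring.inverse (z • (1 : H →L[ℂ] H) - X) u))) := by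
  intro u
  simp only [circleIntegral, deriv_circleMap]
  have hmem : ∀ θ : ℝ, circleMap c R θ ∈ Metric.sphere c R := fun θ =>
    circleMap_mem_sphere c hR.le θ
  apply intervalIntegral.tendsto_integral_filter_of_dominated_convergence
    (fun θ => R * (‖f (circleMap c R θ)‖ * (M * ‖u‖)))
  · filter_upwards with n
    apply Continuous.aestronglyMeasurable
    exact ((continuous_circleMap 0 R).mul continuous_const).smul
      ((hf.comp (continuous_circleMap c R)).smul
        (cont_resolvent_apply (Xn n) c R hR (hinvn n) u))
  · filter_upwards with n
    filter_upwards with θ _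
    rw [norm_smul, norm_smul]
    have hderiv : ‖circleMap 0 R θ * Complex.I‖ = R := by
      simp [abs_of_pos hR]
    rw [hderiv]
    have hb : ‖Ring.inverse (circleMap c R θ • (1 : H →L[ℂ] H) - Xn n) u‖ ≤ M * ‖u‖ :=
      le_trans (ContinuousLinearMap.le_opNorm _ _)
        (mul_le_mul_of_nonneg_right (hM n _ (hmem θ)) (norm_nonneg u))
    gcongr
  · apply Continuous.intervalIntegrable
    exact continuous_const.mul (((hf.comp (continuous_circleMap c R)).norm).mul
      continuous_const)
  · filter_upwards with θ _
    exact ((hsot _ (hmem θ) u).const_smul (f (circleMap c R θ))).const_smul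
      (circleMap 0 R θ * Complex.I)
end
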